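/- Let k be a field and d ≥ 0. Consider the k-algebra homomorphism f_3 : k[a_1,…,a_d, c′, b_1,…,b_{d+1}] → C = k[a_1,…,a_d, c′, b_1,…,b_d, c″] sending a_i ↦ a_i, c′ ↦ c′, b_1 ↦ −c″b_1, b_i ↦ b_{i−1} − c″b_i for 1 < i ≤ d, and b_{d+1} ↦ b_d − c″. Then C, regarded as a module over k[a_1,…,a_d, c′, b_1,…,b_{d+1}] via f_3, is free with basis (1, c″, c″^2, …, c″^d). -/

import Mathlib

open MvPolynomial

/-- Variables of `A_{d+1} = k[a_1,…,a_{d+1}, b_1,…,b_{d+1}]`: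
`Sum.inl p` is `a_{p+1}`, `Sum.inr p` is `b_{p+1}`. -/
abbrev AVar (d : ℕ) : Type := Fin (d + 1) ⊕ Fin (d + 1)

/-- Variables of `k[a_1,…,a_d, c', b_1,…,b_{d+1}]`:
`Sum.inl p` is `a_{p+1}`, `Sum.inr (Sum.inl ())` is `c'`, `Sum.inr (Sum.inr p)` is `b_{p+1}`. -/
abbrev RVar (d : ℕ) : Type := Fin d ⊕ (Unit ⊕ Fin (d + 1))

/-- Variables of `C = k[a_1,…,a_d, c', b_1,…,b_d, c'']`:
`Sum.inl (Sum.inl p)` is `a_{p+1}`, `Sum.inl (Sum.inr ())` is `c'`,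
`Sum.inr (Sum.inl p)` is `b_{p+1}`, `Sum.inr (Sum.inr ())` is `c''`. -/
abbrev CVar (d : ℕ) : Type := (Fin d ⊕ Unit) ⊕ (Fin d ⊕ Unit)

/-- Variables of `B_d = k[a_1,…,a_d, b_1,…,b_d, c]`:
`Sum.inl (Sum.inl p)` is `a_{p+1}`, `Sum.inl (Sum.inr p)` is `b_{p+1}`, `Sum.inr ()` is `c`. -/
abbrev BVar (d : ℕ) : Type := (Fin d ⊕ Fin d) ⊕ Unit
/-- `b_m` in `C = k[a_1,…,a_d,c',b_1,…,b_d,c'']` with conventions `b_0 = 0`, `b_{d+1} = 1`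
(the latter so that `b_m - c''·b_{m+1}` gives `b_d - c''` for `m = d`). -/
noncomputable def bCm (k : Type) [Field k] (d : ℕ) (m : ℕ) : MvPolynomial (CVar d) k :=
  if h : 1 ≤ m ∧ m ≤ d then X (Sum.inr (Sum.inl (⟨m - 1, by omega⟩ : Fin d)))
  else if m = d + 1 then 1 else 0

/-- `f_3 : k[a_1,…,a_d,c',b_1,…,b_{d+1}] → C`, `a_i ↦ a_i`, `c' ↦ c'`,
`b_1 ↦ -c''b_1`, `b_i ↦ b_{i-1} - c''b_i` (`1 < i ≤ d`), `b_{d+1} ↦ b_d - c''`. -/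
noncomputable def f3 (k : Type) [Field k] (d : ℕ) :
    MvPolynomial (RVar d) k →ₐ[k] MvPolynomial (CVar d) k :=
  aeval (fun v => match v with
    | Sum.inl p => X (Sum.inl (Sum.inl p))
    | Sum.inr (Sum.inl ()) => X (Sum.inl (Sum.inr ()))
    | Sum.inr (Sum.inr q) => bCm k d q - X (Sum.inr (Sum.inr ())) * bCm k d ((q : ℕ) + 1))


/-! The polynomial ring `C` is the ring obtained from `R = k[a_1,…,a_d,c',b_1,…,b_{d+1}]` by
adjoining a root of the monic polynomial `p(y) = y^{d+1} + b_{d+1} y^d + ⋯ + b_1`, the root being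
`c''`: the definition of `f_3` makes `p(c'')` telescope to zero, and conversely `b_m ∈ C` is
recovered from `R[y]/(p)` as the value at `y` of the Horner tail `y^{d+1-m} + b_{d+1} y^{d-m} + ⋯`
of `p`. Hence `C ≅ R[y]/(p)`, which is free over `R` with basis `1, y, …, y^d`. -/

theorem PowerBasis.bijective_sum_smul_gen_pow {R S : Type*} [CommRing R] [Ring S] [Algebra R S]
    (pb : PowerBasis R S) {n : ℕ} (hn : pb.dim = n) :
    Function.Bijective fun r : Fin n → R => ∑ i : Fin n, r i • pb.gen ^ (i : ℕ) := by
  convert ((pb.basis.reindex (finCongr hn)).equivFun.symm).bijective using 1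
  funext r
  simp [Module.Basis.equivFun_symm_apply]

namespace F3

variable (k : Type) [Field k] (d : ℕ)

/-- `bR k d m` is `b_{m+1}` (and `0` for `m > d`), shifted by one against `bCm k d m = b_m`. -/
noncomputable def bR (m : ℕ) : MvPolynomial (RVar d) k :=
  if h : m < d + 1 then X (Sum.inr (Sum.inr ⟨m, h⟩)) else 0

noncomputable def c'' : MvPolynomial (CVar d) k := X (Sum.inr (Sum.inr ()))

noncomputable def cPoly : Polynomial (MvPolynomial (RVar d) k) :=
  Polynomial.X ^ (d + 1) + ∑ q ∈ Finset.range (d + 1), Polynomial.C (bR k d q) * Polynomial.X ^ q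

/-- `cPolyHorner k d n = y^n + b_{d+1} y^{n-1} + ⋯ + b_{d+2-n}`. -/
noncomputable def cPolyHorner : ℕ → Polynomial (MvPolynomial (RVar d) k)
  | 0 => 1
  | n + 1 => Polynomial.C (bR k d (d - n)) + Polynomial.X * cPolyHorner n

theorem degree_cPoly_tail_lt :
    (∑ q ∈ Finset.range (d + 1), Polynomial.C (bR k d q) * Polynomial.X ^ q).degree < ↑(d + 1) := by
  rw [← Fin.sum_univ_eq_sum_range (fun q => Polynomial.C (bR k d q) * Polynomial.X ^ q)]
  exact Polynomial.degree_sum_fin_lt _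

theorem cPoly_monic : (cPoly k d).Monic :=
  Polynomial.monic_X_pow_add (degree_cPoly_tail_lt k d)

theorem natDegree_cPoly : (cPoly k d).natDegree = d + 1 := by
  rw [cPoly, Polynomial.natDegree_add_eq_left_of_degree_lt, Polynomial.natDegree_X_pow]
  rw [Polynomial.degree_X_pow]
  exact degree_cPoly_tail_lt k d

theorem cPoly_eq_cPolyHorner_mul_add {n : ℕ} (hn : n ≤ d + 1) :
    cPoly k d = cPolyHorner k d n * Polynomial.X ^ (d + 1 - n)
      + ∑ q ∈ Finset.range (d + 1 - n), Polynomial.C (bR k d q) * Polynomial.X ^ q := by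
  induction n with
  | zero => simp [cPolyHorner, cPoly]
  | succ n ih =>
    rw [ih (by omega), show d + 1 - n = d - n + 1 by omega, show d + 1 - (n + 1) = d - n by omega,
      cPolyHorner, Finset.sum_range_succ]
    ring

theorem cPolyHorner_succ_self : cPolyHorner k d (d + 1) = cPoly k d := by
  simpa using (cPoly_eq_cPolyHorner_mul_add k d le_rfl).symm

theorem bCm_zero : bCm k d 0 = 0 := by simp [bCm]

theorem bCm_succ_self : bCm k d (d + 1) = 1 := by simp [bCm]

theorem f3_bR {m : ℕ} (hm : m < d + 1) :
    f3 k d (bR k d m) = bCm k d m - c'' k d * bCm k d (m + 1) := by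
  simp [bR, hm, f3, c'']

theorem eval₂_cPoly : (cPoly k d).eval₂ (f3 k d : MvPolynomial (RVar d) k →+* _) (c'' k d) = 0 := by
  have hterm : ∀ q ∈ Finset.range (d + 1),
      (Polynomial.C (bR k d q) * Polynomial.X ^ q).eval₂ (f3 k d : MvPolynomial (RVar d) k →+* _)
        (c'' k d) = bCm k d q * c'' k d ^ q - bCm k d (q + 1) * c'' k d ^ (q + 1) := by
    intro q hq
    simp only [Polynomial.eval₂_mul, Polynomial.eval₂_C, Polynomial.eval₂_X_pow, RingHom.coe_coe,
      f3_bR k d (Finset.mem_range.mp hq)]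
    ring
  rw [cPoly, Polynomial.eval₂_add, Polynomial.eval₂_X_pow, Polynomial.eval₂_finsetSum,
    Finset.sum_congr rfl hterm, Finset.sum_range_sub', bCm_zero, bCm_succ_self]
  ring

theorem eval₂_cPolyHorner {n : ℕ} (hn : n ≤ d + 1) :
    (cPolyHorner k d n).eval₂ (f3 k d : MvPolynomial (RVar d) k →+* _) (c'' k d)
      = bCm k d (d + 1 - n) := by
  induction n with
  | zero => simp [cPolyHorner, bCm_succ_self]
  | succ n ih =>
    rw [cPolyHorner, Polynomial.eval₂_add, Polynomial.eval₂_C, Polynomial.eval₂_mul,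
      Polynomial.eval₂_X, ih (by omega), RingHom.coe_coe, f3_bR k d (by omega),
      show d - n + 1 = d + 1 - n by omega, show d + 1 - (n + 1) = d - n by omega]
    ring

noncomputable def toC : AdjoinRoot (cPoly k d) →ₐ[k] MvPolynomial (CVar d) k :=
  AdjoinRoot.liftAlgHom _ (f3 k d) (c'' k d) (eval₂_cPoly k d)

noncomputable def ofC : MvPolynomial (CVar d) k →ₐ[k] AdjoinRoot (cPoly k d) :=
  aeval fun
    | Sum.inl (Sum.inl p) => AdjoinRoot.of _ (X (Sum.inl p))
    | Sum.inl (Sum.inr ()) => AdjoinRoot.of _ (X (Sum.inr (Sum.inl ())))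
    | Sum.inr (Sum.inl q) => AdjoinRoot.mk _ (cPolyHorner k d (d - q))
    | Sum.inr (Sum.inr ()) => AdjoinRoot.root _

theorem ofC_bCm {m : ℕ} (hm : m ≤ d + 1) :
    ofC k d (bCm k d m) = AdjoinRoot.mk _ (cPolyHorner k d (d + 1 - m)) := by
  rcases Nat.eq_zero_or_pos m with rfl | hpos
  · rw [bCm_zero, map_zero, Nat.sub_zero, cPolyHorner_succ_self, AdjoinRoot.mk_self]
  rcases hm.eq_or_lt with rfl | hlt
  · rw [bCm_succ_self, map_one, Nat.sub_self, cPolyHorner, map_one]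
  rw [bCm, dif_pos ⟨hpos, by omega⟩]
  simp only [ofC, aeval_X]
  congr 2
  omega

theorem ofC_comp_f3 : (ofC k d).comp (f3 k d) = AdjoinRoot.ofAlgHom k (cPoly k d) := by
  refine MvPolynomial.algHom_ext ?_
  rintro (p | ⟨⟩ | q)
  · simp [f3, ofC]
  · simp [f3, ofC]
  · have hq := q.isLt
    have hX : X (Sum.inr (Sum.inr q)) = bR k d q := by simp [bR, hq]
    rw [AlgHom.comp_apply, hX, f3_bR k d hq, map_sub, map_mul, ofC_bCm k d hq.le,
      ofC_bCm k d hq, show d + 1 - (q : ℕ) = d - q + 1 by omega,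
      show d + 1 - ((q : ℕ) + 1) = d - q by omega, cPolyHorner, map_add, map_mul,
      AdjoinRoot.mk_C, AdjoinRoot.mk_X, show d - (d - (q : ℕ)) = q by omega]
    simp [ofC, c'']

theorem toC_comp_ofC : (toC k d).comp (ofC k d) = AlgHom.id k _ := by
  refine MvPolynomial.algHom_ext ?_
  rintro ((p | ⟨⟩) | (q | ⟨⟩))
  · simp [toC, ofC, f3]
  · simp [toC, ofC, f3]
  · simp only [toC, ofC, AlgHom.comp_apply, aeval_X, AdjoinRoot.liftAlgHom_mk, AlgHom.id_apply]
    rw [eval₂_cPolyHorner k d (by omega), bCm, dif_pos (by omega)]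
    congr 3
    ext
    simp only
    omega
  · simp [toC, ofC, c'']

theorem ofC_comp_toC : (ofC k d).comp (toC k d) = AlgHom.id k _ := by
  apply AdjoinRoot.algHom_ext'
  · have htoC : (toC k d).comp (AdjoinRoot.ofAlgHom k (cPoly k d)) = f3 k d := by
      ext; simp [toC]
    rw [AlgHom.comp_assoc, htoC, ofC_comp_f3, AlgHom.id_comp]
  · simp [toC, ofC, c'']

noncomputable def adjoinRootEquiv : AdjoinRoot (cPoly k d) ≃ₐ[k] MvPolynomial (CVar d) k :=
  AlgEquiv.ofAlgHom (toC k d) (ofC k d) (toC_comp_ofC k d) (ofC_comp_toC k d)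

end F3

/-- `C = k[a_1,…,a_d,c',b_1,…,b_d,c'']` is free as a module over
`k[a_1,…,a_d,c',b_1,…,b_{d+1}]` (acting through `f_3`) with basis `1, c'', …, c''^d`:
the map `(r_0,…,r_d) ↦ ∑ f_3(r_i)·c''^i` is bijective. -/
theorem statement6 (k : Type) [Field k] (d : ℕ) :
    Function.Bijective (fun r : Fin (d + 1) → MvPolynomial (RVar d) k =>
      ∑ i : Fin (d + 1), f3 k d (r i) * X (Sum.inr (Sum.inr ())) ^ (i : ℕ)) := by
  have hbasis := (AdjoinRoot.powerBasis' (F3.cPoly_monic k d)).bijective_sum_smul_gen_pow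
    (F3.natDegree_cPoly k d)
  convert (F3.adjoinRootEquiv k d).bijective.comp hbasis using 1
  funext r
  simp [F3.adjoinRootEquiv, F3.toC, F3.c'', Algebra.smul_def]
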